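/- Let g = su(2) with basis σx,σy,σz, [σx,σy]=2σz, [σy,σz]=2σx, [σz,σx]=2σy, with the Lorentzian inner product diag(μ1,μ2,-μ3) where μ1,μ2,μ3>0. Then the Ricci tensor in this basis is diagonal with entries -2(μ1-μ2-μ3)(μ1+μ2+μ3)/(μ2μ3), 2(μ1+μ2+μ3)(μ1-μ2+μ3)/(μ1μ3), -2(μ1-μ2-μ3)(μ1-μ2+μ3)/(μ1μ2), and the scalar curvature equals 2((√μ1+√μ2)²+μ3)((√μ1-√μ2)²+μ3)/(μ1μ2μ3), which is strictly positive. -/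

import Mathlib

noncomputable section

/-- The `su(2)` bracket in the standard basis `(σx,σy,σz)`:
`[σx,σy]=2σz`, `[σy,σz]=2σx`, `[σz,σx]=2σy`. -/
def br (u v : Fin 3 → ℝ) : Fin 3 → ℝ :=
  ![2 * (u 1 * v 2 - u 2 * v 1), 2 * (u 2 * v 0 - u 0 * v 2),
    2 * (u 0 * v 1 - u 1 * v 0)]

/-- The Lorentzian metric with matrix `diag(μ1, μ2, -μ3)`. -/
def G (μ1 μ2 μ3 : ℝ) : Matrix (Fin 3) (Fin 3) ℝ := Matrix.diagonal ![μ1, μ2, -μ3]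

/-- The corresponding inner product. -/
def ip (μ1 μ2 μ3 : ℝ) (u v : Fin 3 → ℝ) : ℝ :=
  dotProduct u ((G μ1 μ2 μ3).mulVec v)

/-- For `μ1, μ2, μ3 > 0`: with the Levi-Civita product `L` given by Koszul's
formula, curvature `K(u,v) = L_{[u,v]} - [L_u,L_v]` and Ricci tensor
`ric(u,v) = tr(w ↦ K(u,w)v)`, the Ricci tensor in this basis is diagonal with
the stated entries, and the scalar curvature `tr(Ric)` equals
`2((√μ1+√μ2)²+μ3)((√μ1-√μ2)²+μ3)/(μ1μ2μ3) > 0`. -/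
theorem ricci_su2 (μ1 μ2 μ3 : ℝ) (h1 : 0 < μ1) (h2 : 0 < μ2) (h3 : 0 < μ3)
    (L : (Fin 3 → ℝ) → (Fin 3 → ℝ) → (Fin 3 → ℝ))
    (hL : ∀ u v w, 2 * ip μ1 μ2 μ3 (L u v) w =
      ip μ1 μ2 μ3 (br u v) w + ip μ1 μ2 μ3 (br w u) v + ip μ1 μ2 μ3 (br w v) u)
    (K : (Fin 3 → ℝ) → (Fin 3 → ℝ) → (Fin 3 → ℝ) → (Fin 3 → ℝ))
    (hK : ∀ u v w, K u v w = L (br u v) w - L u (L v w) + L v (L u w))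
    (ric : (Fin 3 → ℝ) → (Fin 3 → ℝ) → ℝ)
    (hric : ∀ u v, ric u v = ∑ i : Fin 3, K u (Pi.single i 1) v i) :
    (∀ i j : Fin 3, ric (Pi.single i 1) (Pi.single j 1) =
      Matrix.diagonal
        ![-2 * (μ1 - μ2 - μ3) * (μ1 + μ2 + μ3) / (μ2 * μ3),
          2 * (μ1 + μ2 + μ3) * (μ1 - μ2 + μ3) / (μ1 * μ3),
          -2 * (μ1 - μ2 - μ3) * (μ1 - μ2 + μ3) / (μ1 * μ2)] i j) ∧
    (∀ R : Matrix (Fin 3) (Fin 3) ℝ,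
      (∀ u v, ip μ1 μ2 μ3 (R.mulVec u) v = ric u v) →
      R.trace = 2 * ((Real.sqrt μ1 + Real.sqrt μ2) ^ 2 + μ3) *
        ((Real.sqrt μ1 - Real.sqrt μ2) ^ 2 + μ3) / (μ1 * μ2 * μ3)) ∧
    0 < 2 * ((Real.sqrt μ1 + Real.sqrt μ2) ^ 2 + μ3) *
        ((Real.sqrt μ1 - Real.sqrt μ2) ^ 2 + μ3) / (μ1 * μ2 * μ3) := by
  have e1 : μ1 ≠ 0 := h1.ne'
  have e2 : μ2 ≠ 0 := h2.ne'
  have e3 : μ3 ≠ 0 := h3.ne'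
  have hip : ∀ u v : Fin 3 → ℝ, ip μ1 μ2 μ3 u v =
      u 0 * (μ1 * v 0) + u 1 * (μ2 * v 1) + u 2 * (-μ3 * v 2) := by
    intro u v
    simp [ip, G, Matrix.mulVec_diagonal, dotProduct, Fin.sum_univ_three]
  have hmk0 : ∀ h, (⟨0, h⟩ : Fin 3) = 0 := fun _ => rfl
  have hmk1 : ∀ h, (⟨1, h⟩ : Fin 3) = 1 := fun _ => rfl
  have hmk2 : ∀ h, (⟨2, h⟩ : Fin 3) = 2 := fun _ => rfl
  have hs0 : (Pi.single 0 1 : Fin 3 → ℝ) = ![1,0,0] := by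
    ext i; fin_cases i <;> simp
  have hs1 : (Pi.single 1 1 : Fin 3 → ℝ) = ![0,1,0] := by
    ext i; fin_cases i <;> simp
  have hs2 : (Pi.single 2 1 : Fin 3 → ℝ) = ![0,0,1] := by
    ext i; fin_cases i <;> simp
  have hL0 : ∀ u v, L u v 0 =
      ((μ1 - μ2 - μ3) * (u 1 * v 2) - (μ1 + μ2 + μ3) * (u 2 * v 1)) / μ1 := by
    intro u v
    have h := hL u v (Pi.single 0 1)
    simp only [hip, br, hs0, hs1, hs2] at h
    norm_num [Matrix.cons_val_zero, Matrix.cons_val_one, Matrix.head_cons, Matrix.cons_val_two, Matrix.tail_cons] at h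
    field_simp
    linarith
  have hL1 : ∀ u v, L u v 1 =
      ((μ1 + μ2 + μ3) * (u 2 * v 0) + (μ1 - μ2 + μ3) * (u 0 * v 2)) / μ2 := by
    intro u v
    have h := hL u v (Pi.single 1 1)
    simp only [hip, br, hs0, hs1, hs2] at h
    norm_num [Matrix.cons_val_zero, Matrix.cons_val_one, Matrix.head_cons, Matrix.cons_val_two, Matrix.tail_cons] at h
    field_simp
    linarith
  have hL2 : ∀ u v, L u v 2 =
      ((μ1 - μ2 + μ3) * (u 0 * v 1) + (μ1 - μ2 - μ3) * (u 1 * v 0)) / μ3 := by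
    intro u v
    have h := hL u v (Pi.single 2 1)
    simp only [hip, br, hs0, hs1, hs2] at h
    norm_num [Matrix.cons_val_zero, Matrix.cons_val_one, Matrix.head_cons, Matrix.cons_val_two, Matrix.tail_cons] at h
    field_simp
    linarith
  have hricval : ∀ i j : Fin 3, ric (Pi.single i 1) (Pi.single j 1) =
      Matrix.diagonal
        ![-2 * (μ1 - μ2 - μ3) * (μ1 + μ2 + μ3) / (μ2 * μ3),
          2 * (μ1 + μ2 + μ3) * (μ1 - μ2 + μ3) / (μ1 * μ3),
          -2 * (μ1 - μ2 - μ3) * (μ1 - μ2 + μ3) / (μ1 * μ2)] i j := by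
    intro i j
    fin_cases i <;> fin_cases j <;>
      · simp only [hmk0, hmk1, hmk2, hric, Fin.sum_univ_three, hK, Pi.sub_apply, Pi.add_apply,
          hL0, hL1, hL2, br, hs0, hs1, hs2, Matrix.diagonal_apply]
        norm_num [Matrix.cons_val_zero, Matrix.cons_val_one, Matrix.head_cons, Matrix.cons_val_two, Matrix.tail_cons, Fin.ext_iff]
        all_goals field_simp
        all_goals ring
  refine ⟨hricval, ?_, ?_⟩
  · intro R hR
    have key : ∀ i j : Fin 3, ip μ1 μ2 μ3 (R.mulVec (Pi.single j 1)) (Pi.single i 1) =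
        R i j * (![μ1, μ2, -μ3] i) := by
      intro i j
      rw [hip]
      fin_cases i <;> fin_cases j <;>
        simp [hmk0, hmk1, hmk2, Matrix.mulVec, dotProduct, Fin.sum_univ_three, hs0, hs1, hs2] <;> ring
    have h00 := (key 0 0).symm.trans ((hR _ _).trans (hricval 0 0))
    have h11 := (key 1 1).symm.trans ((hR _ _).trans (hricval 1 1))
    have h22 := (key 2 2).symm.trans ((hR _ _).trans (hricval 2 2))
    norm_num [Matrix.diagonal_apply, Matrix.cons_val_zero, Matrix.cons_val_one,
      Matrix.head_cons, Matrix.cons_val_two, Matrix.tail_cons] at h00 h11 h22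
    have hs1 : Real.sqrt μ1 ^ 2 = μ1 := Real.sq_sqrt h1.le
    have hs2 : Real.sqrt μ2 ^ 2 = μ2 := Real.sq_sqrt h2.le
    have hkey : 2 * ((Real.sqrt μ1 + Real.sqrt μ2) ^ 2 + μ3) *
        ((Real.sqrt μ1 - Real.sqrt μ2) ^ 2 + μ3) =
        2 * ((μ1 + μ2 + μ3) ^ 2 - 4 * (μ1 * μ2)) := by
      linear_combination
        (2 * (Real.sqrt μ1 ^ 2 + Real.sqrt μ2 ^ 2 + μ1 + μ2 + 2 * μ3) - 8 * Real.sqrt μ2 ^ 2) * hs1 +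
        (2 * (Real.sqrt μ1 ^ 2 + Real.sqrt μ2 ^ 2 + μ1 + μ2 + 2 * μ3) - 8 * μ1) * hs2
    rw [Matrix.trace, Fin.sum_univ_three]
    simp only [Matrix.diag_apply]
    rw [eq_div_iff (by positivity), hkey]
    rw [eq_div_iff (ne_of_gt (mul_pos h2 h3))] at h00
    rw [eq_div_iff (ne_of_gt (mul_pos h1 h3))] at h11
    rw [eq_div_iff (ne_of_gt (mul_pos h1 h2))] at h22
    linear_combination h00 + h11 - h22
  · have hs : (0:ℝ) < (Real.sqrt μ1 - Real.sqrt μ2) ^ 2 + μ3 := by positivity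
    positivity
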